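/- arXiv:1701.01677 — 3 statements merged into one kernel-verified Lean document; each statement's English description precedes it below -/
import Mathlib

section
/- Let N = {1, ..., n} with n ≥ 2 and let Γ be the directed cycle on N with edge set {(i, i+1) : i = 1, ..., n-1} ∪ {(n, 1)}. Then a permutation π of N is consistent with Γ if and only if π = π_k for some k ∈ N, where π_k is the permutation that lists the players in the order (k-1, k-2, ..., k+1, k) (indices taken modulo n), i.e., π_k assigns to player k+j (mod n) the position n - j for j = 0, 1, ..., n-1. In particular there are exactly n permutations consistent with the directed n-cycle. -/
/-- Edge relation of the directed cycle `(1, 2, ..., n, 1)` on `Fin n`: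
there is a directed edge from `i` to `i + 1` (mod `n`). -/
def cycleEdge (n : ℕ) [NeZero n] (i j : Fin n) : Prop := j = i + 1

/-- `j` is a successor of `i` in the restriction of the cycle digraph to the
coalition `S`, i.e. there is a directed path from `i` to `j` using only
players of `S`. -/
def isSuccessorIn (n : ℕ) [NeZero n] (S : Set (Fin n)) (i j : Fin n) : Prop :=
  Relation.TransGen (fun a b => a ∈ S ∧ b ∈ S ∧ cycleEdge n a b) i j

/-- `i` dominates `j` in the restriction of the cycle digraph to `S`:
`j` is a successor of `i` but `i` is not a successor of `j`. -/
def dominatesIn (n : ℕ) [NeZero n] (S : Set (Fin n)) (i j : Fin n) : Prop :=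
  isSuccessorIn n S i j ∧ ¬ isSuccessorIn n S j i

/-- `P̄_π(i)`: the set of players whose position under `π` is at most that of `i`
(including `i` itself). -/
def Pbar {n : ℕ} (π : Equiv.Perm (Fin n)) (i : Fin n) : Set (Fin n) := {j | π j ≤ π i}

/-- `P_π(i)`: the set of players whose position under `π` is strictly less than
that of `i`. -/
def Pset {n : ℕ} (π : Equiv.Perm (Fin n)) (i : Fin n) : Set (Fin n) := {j | π j < π i}

/-- A permutation `π` is consistent with the directed cycle on `Fin n` if for
every player `i`, no player `j ∈ P̄_π(i)` dominates `i` in the restriction of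
the cycle digraph to `P̄_π(i)`. -/
def consistent (n : ℕ) [NeZero n] (π : Equiv.Perm (Fin n)) : Prop :=
  ∀ i : Fin n, ∀ j ∈ Pbar π i, ¬ dominatesIn n (Pbar π i) j i

/-- The permutation `π_k` that lists the players in the order
`(k-1, k-2, ..., k+1, k)` (indices mod `n`), i.e. it assigns to player
`k + j` the position `n - 1 - j` (zero-indexed) for `j = 0, ..., n-1`;
explicitly, `π_k i = k - 1 - i`. -/
def cyclePerm (n : ℕ) [NeZero n] (k : Fin n) : Equiv.Perm (Fin n) :=
  Equiv.subLeft (k - 1)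

/-!
In the restriction of the cycle to a coalition `S`, the only edge into `i` comes from `i - 1`.
So nobody reaches `i` when `i - 1 ∉ S`; everybody reaches everybody when `S` is everything;
and when `i, i - 1 ∈ S ≠ univ`, the first player of the maximal arc of `S` ending at `i`
dominates `i`. Applied to `S = P̄_π(i)`, this says that `π` is consistent iff every player
except the last-ranked one is ranked before its predecessor. Starting from the last-ranked
player `L`, the positions `π L, π (L + 1), …` are then strictly decreasing, which forces
`π (L + m) = n - 1 - m`, i.e. `π = π_L`.
-/

open Fin.NatCast Fin.CommRing

section
variable {n : ℕ} [NeZero n] {S : Set (Fin n)}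

lemma not_isSuccessorIn_of_sub_one_notMem {i : Fin n} (h : i - 1 ∉ S) (j : Fin n) :
    ¬ isSuccessorIn n S j i := by
  rw [isSuccessorIn, Relation.TransGen.tail'_iff]
  rintro ⟨a, -, ha, -, rfl⟩
  exact h (by simpa using ha)

lemma isSuccessorIn_sub_of_forall_mem {i : Fin n} (m : ℕ)
    (h : ∀ l ≤ m + 1, i - (l : Fin n) ∈ S) : isSuccessorIn n S (i - (m + 1 : ℕ)) i := by
  induction m with
  | zero => exact .single ⟨h 1 le_rfl, by simpa using h 0 (by omega), by simp [cycleEdge]⟩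
  | succ m ih =>
    refine .head ⟨h (m + 2) le_rfl, h (m + 1) (by omega), ?_⟩ (ih fun l hl => h l (by omega))
    simp only [cycleEdge]
    push_cast
    ring

lemma isSuccessorIn_univ (i j : Fin n) : isSuccessorIn n Set.univ i j := by
  have h := isSuccessorIn_sub_of_forall_mem (S := Set.univ) (i := j) (j - i - 1).val
    fun _ _ => Set.mem_univ _
  rwa [Nat.cast_succ, Fin.cast_val_eq_self, sub_add_cancel, sub_sub_cancel] at h

lemma exists_dominatesIn {i c : Fin n} (hi : i ∈ S) (hpred : i - 1 ∈ S) (hc : c ∉ S) :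
    ∃ s ∈ S, dominatesIn n S s i := by
  classical
  have hP : ∃ t : ℕ, i - (t : Fin n) ∉ S :=
    ⟨(i - c).val, by rwa [Fin.cast_val_eq_self, sub_sub_cancel]⟩
  have htwo : 2 ≤ Nat.find hP := by
    rw [Nat.le_find_iff]
    intro t ht
    interval_cases t <;> simpa
  obtain ⟨m, hm⟩ := Nat.exists_eq_add_of_le' htwo
  have harc : ∀ l ≤ m + 1, i - (l : Fin n) ∈ S := fun l hl =>
    not_not.mp (Nat.find_min hP (by omega))
  have hout : i - ((m + 1 : ℕ) : Fin n) - 1 ∉ S := by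
    have hsub : i - ((m + 1 : ℕ) : Fin n) - 1 = i - ((m + 2 : ℕ) : Fin n) := by
      push_cast
      ring
    rw [hsub, ← hm]
    exact Nat.find_spec hP
  exact ⟨_, harc (m + 1) le_rfl, isSuccessorIn_sub_of_forall_mem m harc,
    not_isSuccessorIn_of_sub_one_notMem hout i⟩

lemma cyclePerm_apply_sub_one (k i : Fin n) : cyclePerm n k (i - 1) = cyclePerm n k i + 1 := by
  simp only [cyclePerm, Equiv.subLeft_apply]
  ring

end

section
variable {n : ℕ} {π : Equiv.Perm (Fin (n + 1))}

theorem consistent_iff_lt_apply_sub_one :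
    consistent (n + 1) π ↔ ∀ i, π i ≠ Fin.last n → π i < π (i - 1) := by
  constructor
  · intro hcons i hi
    by_contra! hle
    have hlast : π.symm (Fin.last n) ∉ Pbar π i := by
      simpa [Pbar] using hi
    obtain ⟨s, hs, hdom⟩ := exists_dominatesIn (le_refl (π i)) hle hlast
    exact hcons i s hs hdom
  · intro h i j _ ⟨hji, hij⟩
    by_cases hi : π i = Fin.last n
    · have huniv : Pbar π i = Set.univ :=
        Set.eq_univ_of_forall fun a => show π a ≤ π i from hi ▸ Fin.le_last _
      exact hij (huniv ▸ isSuccessorIn_univ i j)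
    · exact not_isSuccessorIn_of_sub_one_notMem (S := Pbar π i) (h i hi).not_ge j hji

lemma cyclePerm_lt_apply_sub_one (k i : Fin (n + 1)) (hi : cyclePerm (n + 1) k i ≠ Fin.last n) :
    cyclePerm (n + 1) k i < cyclePerm (n + 1) k (i - 1) := by
  rw [cyclePerm_apply_sub_one]
  exact Fin.lt_add_one_iff.mpr (lt_of_le_of_ne (Fin.le_last _) hi)

lemma eq_cyclePerm_of_lt_apply_sub_one (h : ∀ i, π i ≠ Fin.last n → π i < π (i - 1)) :
    π = cyclePerm (n + 1) (π.symm (Fin.last n)) := by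
  set L := π.symm (Fin.last n)
  have hanti : StrictAnti fun m => π (L + m) := by
    refine Fin.strictAnti_iff_succ_lt.mpr fun m => ?_
    have hne : π (L + m.succ) ≠ Fin.last n := by
      rw [← π.apply_symm_apply (Fin.last n), π.injective.ne_iff]
      exact fun he => m.succ_ne_zero (add_eq_left.mp he)
    have := h _ hne
    show π (L + m.succ) < π (L + m.castSucc)
    rw [← Fin.coeSucc_eq_succ, ← add_assoc] at this ⊢
    rwa [add_sub_cancel_right] at this
  have hrev : ∀ m, π (L + m) = Fin.rev m := fun m => by
    have hmono : StrictMono fun m => Fin.rev (π (L + m)) := fun _ _ hab =>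
      Fin.rev_lt_rev.mpr (hanti hab)
    exact Fin.rev_eq_iff.mp hmono.apply_eq
  ext1 i
  have hi := hrev (i - L)
  rw [add_sub_cancel] at hi
  rw [hi, ← Fin.last_sub, neg_eq_iff_eq_neg.mp (Fin.neg_last n)]
  simp only [cyclePerm, Equiv.subLeft_apply]
  ring

end

theorem cycle_consistent_iff_general (n : ℕ) [NeZero n] :
    (∀ π : Equiv.Perm (Fin n), consistent n π ↔ ∃ k : Fin n, π = cyclePerm n k) ∧
      Set.ncard {π : Equiv.Perm (Fin n) | consistent n π} = n := by
  obtain ⟨n, rfl⟩ := Nat.exists_eq_succ_of_ne_zero (NeZero.ne n)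
  have hiff (π : Equiv.Perm (Fin (n + 1))) :
      consistent (n + 1) π ↔ ∃ k, π = cyclePerm (n + 1) k := by
    rw [consistent_iff_lt_apply_sub_one]
    refine ⟨fun h => ⟨_, eq_cyclePerm_of_lt_apply_sub_one h⟩, ?_⟩
    rintro ⟨k, rfl⟩
    exact cyclePerm_lt_apply_sub_one k
  have hinj : Function.Injective (cyclePerm (n + 1)) := fun a b hab => by
    simpa [cyclePerm] using congrArg (· 0) hab
  refine ⟨hiff, ?_⟩
  have hset : {π | consistent (n + 1) π} = Set.range (cyclePerm (n + 1)) := by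
    ext π
    simp [hiff, eq_comm]
  rw [hset, Set.ncard_range_of_injective hinj, Nat.card_fin]

/-- A permutation of `N = Fin n` is consistent with the directed `n`-cycle if and
only if it equals `π_k` for some `k`; in particular there are exactly `n`
permutations consistent with the directed `n`-cycle. -/
theorem cycle_consistent_iff (n : ℕ) [NeZero n] (hn : 2 ≤ n) :
    (∀ π : Equiv.Perm (Fin n), consistent n π ↔ ∃ k : Fin n, π = cyclePerm n k) ∧
      Set.ncard {π : Equiv.Perm (Fin n) | consistent n π} = n :=
  cycle_consistent_iff_general n
end

section
/- Let N = {1, ..., n} with n ≥ 2 and let Γ be the directed cycle on N with edge set {(i, i+1) : i = 1, ..., n-1} ∪ {(n, 1)}. Then the number of permutations of N that are consistent with Γ equals n. -/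
/-!
A player `i` placed after its cyclic predecessor `i - 1` but before the last player is dominated by
`i - 1`: the edge `i - 1 → i` lies in `P̄_π(i)`, whereas a path back from `i` to `i - 1` has to run
around the whole cycle. Conversely, if `i - 1 ∉ P̄_π(i)` nobody reaches `i` inside `P̄_π(i)`, and
the last player sees the full, strongly connected cycle. So `π` is consistent iff every player
but the last one comes before its predecessor, i.e. positions strictly decrease along the cycle
starting from the last player `a`. This forces `π i = rev (i - a)`: one permutation for each `a`.
-/

open Relation

namespace CycleConsistency

variable {m : ℕ}

lemma sub_one_mem_of_isSuccessorIn {S : Set (Fin (m + 1))} {i j : Fin (m + 1)}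
    (h : isSuccessorIn (m + 1) S j i) : i - 1 ∈ S := by
  obtain ⟨b, -, hb, -, rfl⟩ := TransGen.tail'_iff.mp h
  simpa using hb

lemma reflTransGen_cycleEdge_add (i k : Fin (m + 1)) :
    ReflTransGen (cycleEdge (m + 1)) i (i + k) := by
  induction k using Fin.induction with
  | zero => simpa using ReflTransGen.refl
  | succ k ih => exact ih.tail (by rw [cycleEdge, ← Fin.coeSucc_eq_succ, add_assoc])

lemma isSuccessorIn_univ (i j : Fin (m + 1)) : isSuccessorIn (m + 1) Set.univ i j := by
  have hreach := ReflTransGen.mono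
    (p := fun a b => a ∈ Set.univ ∧ b ∈ Set.univ ∧ cycleEdge (m + 1) a b)
    (fun a b hab => ⟨Set.mem_univ a, Set.mem_univ b, hab⟩) _ _
    (reflTransGen_cycleEdge_add (i + 1) (j - (i + 1)))
  rw [add_sub_cancel] at hreach
  exact TransGen.head' ⟨Set.mem_univ i, Set.mem_univ _, rfl⟩ hreach

/-- A path inside `S` starting at `i` advances one step at a time, so it cannot pass a player
`x ∉ S`; hence it stays in the arc `i, i + 1, …, x - 1`, which misses `i - 1` unless `S` is
everything. -/
lemma eq_univ_of_isSuccessorIn_sub_one {S : Set (Fin (m + 1))} {i : Fin (m + 1)}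
    (h : isSuccessorIn (m + 1) S i (i - 1)) : S = Set.univ := by
  refine Set.eq_univ_of_forall fun x => by_contra fun hx => ?_
  have hstep : ∀ y, y - i < x - i → y + 1 ∈ S → y + 1 - i < x - i := fun y hy hy1 => by
    rw [← sub_add_eq_add_sub]
    refine (Fin.add_one_le_of_lt hy).lt_of_ne ?_
    rw [sub_add_eq_add_sub, Ne, sub_left_inj]
    exact ne_of_mem_of_not_mem hy1 hx
  have harc : ∀ y, isSuccessorIn (m + 1) S i y → y - i < x - i := by
    intro y hy
    induction hy with
    | single hiy =>
      obtain ⟨hi, hi1, rfl⟩ := hiy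
      have hxi : x ≠ i := (ne_of_mem_of_not_mem hi hx).symm
      exact hstep i (by simpa [Fin.pos_iff_ne_zero, sub_eq_zero] using hxi) hi1
    | tail _ hyz ih =>
      obtain ⟨-, hz, rfl⟩ := hyz
      exact hstep _ ih hz
  have hlast : i - 1 - i = Fin.last m := by
    rw [sub_sub_cancel_left, eq_neg_of_add_eq_zero_left (Fin.last_add_one m)]
  exact (harc _ h).not_ge (hlast ▸ Fin.le_last _)

lemma Pbar_eq_univ_iff {π : Equiv.Perm (Fin (m + 1))} {i : Fin (m + 1)} :
    Pbar π i = Set.univ ↔ π i = Fin.last m := by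
  refine ⟨fun h => Fin.last_le_iff.mp ?_, fun h => ?_⟩
  · have hmem : π.symm (Fin.last m) ∈ Pbar π i := h ▸ Set.mem_univ _
    simpa [Pbar] using hmem
  · ext j
    simp [Pbar, h, Fin.le_last]

theorem consistent_iff_lt_apply_sub_one {π : Equiv.Perm (Fin (m + 1))} :
    consistent (m + 1) π ↔ ∀ i, π i ≠ Fin.last m → π i < π (i - 1) := by
  refine ⟨fun hc i hi => ?_, fun h i j _ hji => ?_⟩
  · by_contra! hle
    have hmem : i - 1 ∈ Pbar π i := hle
    refine hc i (i - 1) hmem ⟨TransGen.single ⟨hmem, le_refl (π i), (sub_add_cancel i 1).symm⟩, ?_⟩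
    exact fun hback => hi (Pbar_eq_univ_iff.mp (eq_univ_of_isSuccessorIn_sub_one hback))
  · by_cases hi : π i = Fin.last m
    · exact hji.2 (Pbar_eq_univ_iff.mpr hi ▸ isSuccessorIn_univ i j)
    · exact (h i hi).not_ge (sub_one_mem_of_isSuccessorIn hji.1)

def cycleOrder (a : Fin (m + 1)) : Equiv.Perm (Fin (m + 1)) :=
  (Equiv.subRight a).trans Fin.revPerm

@[simp] lemma cycleOrder_apply (a i : Fin (m + 1)) : cycleOrder a i = Fin.rev (i - a) := rfl

lemma cycleOrder_injective : Function.Injective (cycleOrder (m := m)) := by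
  intro a b hab
  simpa using congrArg (fun π => π 0) hab

lemma consistent_cycleOrder (a : Fin (m + 1)) : consistent (m + 1) (cycleOrder a) := by
  rw [consistent_iff_lt_apply_sub_one]
  intro i hi
  rw [cycleOrder_apply, ← Fin.rev_zero, Ne, Fin.rev_inj, ← Ne, ← Fin.pos_iff_ne_zero] at hi
  rw [cycleOrder_apply, cycleOrder_apply, Fin.rev_lt_rev, sub_right_comm]
  exact Fin.sub_one_lt_iff.mpr hi

lemma eq_cycleOrder_of_consistent {π : Equiv.Perm (Fin (m + 1))} (hπ : consistent (m + 1) π) :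
    π = cycleOrder (π.symm (Fin.last m)) := by
  set a := π.symm (Fin.last m)
  have hanti : StrictAnti fun t => π (a + t) := by
    refine Fin.strictAnti_iff_succ_lt.mpr fun k => ?_
    have hne : π (a + k.succ) ≠ Fin.last m := by
      rw [← π.apply_symm_apply (Fin.last m), π.injective.ne_iff]
      exact fun h => Fin.succ_ne_zero k (add_eq_left.mp h)
    simpa [← Fin.coeSucc_eq_succ, ← add_assoc] using consistent_iff_lt_apply_sub_one.mp hπ _ hne
  ext x
  have hx := (Fin.rev_strictAnti.comp hanti).apply_eq (x := x - a)
  simp only [Function.comp_apply, add_sub_cancel] at hx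
  rw [cycleOrder_apply, ← hx, Fin.rev_rev]

end CycleConsistency

open CycleConsistency in
theorem card_cycle_consistent_general (n : ℕ) [NeZero n] :
    Set.ncard {π : Equiv.Perm (Fin n) | consistent n π} = n := by
  obtain ⟨m, rfl⟩ := Nat.exists_eq_succ_of_ne_zero (NeZero.ne n)
  have hset : {π | consistent (m + 1) π} = Set.range (cycleOrder (m := m)) := by
    ext π
    exact ⟨fun hπ => ⟨_, (eq_cycleOrder_of_consistent hπ).symm⟩,
      by rintro ⟨a, rfl⟩; exact consistent_cycleOrder a⟩
  rw [hset, Set.ncard_range_of_injective cycleOrder_injective, Nat.card_eq_fintype_card,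
    Fintype.card_fin]

/-- The number of permutations of `N = Fin n` consistent with the directed
`n`-cycle equals `n`. -/
theorem card_cycle_consistent (n : ℕ) [NeZero n] (hn : 2 ≤ n) :
    Set.ncard {π : Equiv.Perm (Fin n) | consistent n π} = n :=
  card_cycle_consistent_general n
end

section
/- Let N = {1, ..., n} with n ≥ 2 and let Γ be the directed cycle on N with edge set {(i, i+1) : i = 1, ..., n-1} ∪ {(n, 1)}. Fix a player i ∈ N. Then for every k ∈ {1, ..., n} there is exactly one permutation π of N consistent with Γ such that |P̄_π(i)| = k; equivalently, the map π ↦ |P̄_π(i)| is a bijection from the set of permutations consistent with Γ onto {1, ..., n}. -/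
open Fin
open scoped Fin.CommRing

variable {n : ℕ}

lemma mem_Pbar {π : Equiv.Perm (Fin n)} {i j : Fin n} : j ∈ Pbar π i ↔ π j ≤ π i := Iff.rfl

lemma isSuccessorIn_of_forall_mem {S : Set (Fin (n + 1))} (hS : ∀ y, y ∈ S) (a b : Fin (n + 1)) :
    isSuccessorIn (n + 1) S a b := by
  have edge (y : Fin (n + 1)) : y ∈ S ∧ y + 1 ∈ S ∧ cycleEdge (n + 1) y (y + 1) :=
    ⟨hS _, hS _, rfl⟩
  have reach (j : Fin (n + 1)) :
      Relation.ReflTransGen (fun a b => a ∈ S ∧ b ∈ S ∧ cycleEdge (n + 1) a b) a (a + j) := by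
    induction j using Fin.induction with
    | zero => simpa using .refl
    | succ j ih => simpa [← coeSucc_eq_succ, add_assoc] using ih.tail (edge _)
  simpa [isSuccessorIn] using Relation.TransGen.tail' (reach (b - 1 - a)) (edge _)

lemma sub_lt_sub_of_isSuccessorIn {S : Set (Fin (n + 1))} {x a b : Fin (n + 1)} (hx : x ∉ S)
    (h : isSuccessorIn (n + 1) S a b) : a - x < b - x := by
  have edge {a b : Fin (n + 1)} (hab : a ∈ S ∧ b ∈ S ∧ cycleEdge (n + 1) a b) : a - x < b - x := by
    obtain ⟨-, hb, rfl : b = a + 1⟩ := hab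
    have hne : a - x ≠ last n := fun h => hx <| by
      convert hb using 1
      linear_combination -h - last_add_one n
    rw [add_sub_right_comm]
    exact Fin.lt_def.2 (by rw [val_add_one_of_lt (lt_of_le_of_ne (le_last _) hne)]; omega)
  induction h with
  | single hab => exact edge hab
  | tail _ hbc ih => exact ih.trans (edge hbc)

lemma consistent_subLeft (c : Fin (n + 1)) : consistent (n + 1) (Equiv.subLeft c) := by
  rintro i j hj ⟨hji, hij⟩
  by_cases hi : c - i = last n
  · exact hij (isSuccessorIn_of_forall_mem (fun y => (le_last (c - y)).trans_eq hi.symm) i j)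
  -- The player `c + 1` moves last, so it lies outside `P̄(i)` unless it is `i`.
  have hlast : c - (c + 1) = last n := by linear_combination -(last_add_one n)
  have hout : c + 1 ∉ Pbar (Equiv.subLeft c) i := fun h =>
    hi (le_antisymm (le_last _) (hlast.symm.trans_le h))
  have hrev (y : Fin (n + 1)) : y - (c + 1) = rev (c - y) := by
    rw [← last_sub]; linear_combination -(last_add_one n)
  have := sub_lt_sub_of_isSuccessorIn hout hji
  rw [hrev, hrev, rev_lt_rev] at this
  exact absurd hj (not_le.2 this)

lemma consistent.apply_lt_apply_sub_one {π : Equiv.Perm (Fin (n + 1))} (hπ : consistent (n + 1) π)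
    {p : Fin (n + 1)} (hp : π p ≠ last n) : π p < π (p - 1) := by
  by_contra! hle
  have hout : π.symm (last n) ∉ Pbar π p := fun h =>
    hp (le_antisymm (le_last _) (by simpa using mem_Pbar.1 h))
  refine hπ p (p - 1) hle
    ⟨.single ⟨hle, mem_Pbar.2 le_rfl, (sub_add_cancel p 1).symm⟩, fun hback => ?_⟩
  have hpos : 0 < p - π.symm (last n) :=
    Fin.pos_iff_ne_zero.2 (sub_ne_zero.2 (ne_of_mem_of_not_mem (mem_Pbar.2 le_rfl) hout))
  have := sub_lt_sub_of_isSuccessorIn hout hback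
  rw [sub_right_comm] at this
  exact lt_asymm this (sub_one_lt_iff.2 hpos)

lemma consistent.exists_eq_subLeft {π : Equiv.Perm (Fin (n + 1))} (hπ : consistent (n + 1) π) :
    ∃ c, π = Equiv.subLeft c := by
  set t := π.symm (last n)
  have hmono : StrictMono fun j => rev (π (t + j)) := by
    refine strictMono_iff_lt_succ.2 fun j => rev_lt_rev.2 ?_
    have hne : π (t + j.succ) ≠ last n := fun h => succ_ne_zero j <| by
      simpa [t] using π.injective (h.trans (π.apply_symm_apply _).symm)
    simpa [← coeSucc_eq_succ, ← add_assoc] using hπ.apply_lt_apply_sub_one hne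
  refine ⟨t - 1, Equiv.ext fun p => ?_⟩
  have := hmono.apply_eq (x := p - t)
  rw [add_sub_cancel, rev_eq_iff] at this
  rw [Equiv.subLeft_apply, this, ← last_sub]
  linear_combination last_add_one n

lemma consistent_iff_exists_eq_subLeft {π : Equiv.Perm (Fin (n + 1))} :
    consistent (n + 1) π ↔ ∃ c, π = Equiv.subLeft c :=
  ⟨consistent.exists_eq_subLeft, by rintro ⟨c, rfl⟩; exact consistent_subLeft c⟩

lemma ncard_Pbar (π : Equiv.Perm (Fin n)) (i : Fin n) : (Pbar π i).ncard = π i + 1 := by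
  rw [show Pbar π i = π ⁻¹' Set.Iic (π i) from rfl,
    Set.ncard_preimage_of_injective_subset_range π.injective (by simp), ← Finset.coe_Iic,
    Set.ncard_coe_finset, card_Iic]

theorem cycle_consistent_Pbar_card_existsUnique_general (n : ℕ) [NeZero n]
    (i : Fin n) :
    ∀ k : ℕ, 1 ≤ k → k ≤ n →
      ∃! π : Equiv.Perm (Fin n), consistent n π ∧ (Pbar π i).ncard = k := by
  intro k hk1 hkn
  obtain ⟨m, rfl⟩ := Nat.exists_eq_succ_of_ne_zero (NeZero.ne n)
  let q : Fin (m + 1) := ⟨k - 1, by omega⟩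
  have hcard (π : Equiv.Perm (Fin (m + 1))) : (Pbar π i).ncard = k ↔ π i = q := by
    rw [ncard_Pbar, Fin.ext_iff, show (q : ℕ) = k - 1 from rfl]; omega
  simp only [hcard, consistent_iff_exists_eq_subLeft]
  refine ⟨Equiv.subLeft (q + i), ⟨⟨_, rfl⟩, add_sub_cancel_right q i⟩, ?_⟩
  rintro π ⟨⟨c, rfl⟩, hc⟩
  rw [← sub_eq_iff_eq_add.1 hc]

/-- Fix a player `i` in the directed `n`-cycle. For every `k ∈ {1, ..., n}`
there is exactly one permutation `π` consistent with the cycle such that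
`|P̄_π(i)| = k`. -/
theorem cycle_consistent_Pbar_card_existsUnique (n : ℕ) [NeZero n] (hn : 2 ≤ n)
    (i : Fin n) :
    ∀ k : ℕ, 1 ≤ k → k ≤ n →
      ∃! π : Equiv.Perm (Fin n), consistent n π ∧ (Pbar π i).ncard = k :=
  cycle_consistent_Pbar_card_existsUnique_general n i
end
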